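/- arXiv:gr-qc/0406122 — 12 statements merged into one kernel-verified Lean document; each statement's English description precedes it below -/
import Mathlib

section
/- Let k > 0, let I ⊆ (−1,∞) be an open interval, let χ : I → ℝ satisfy χ(π) ≠ π for all π ∈ I, and let e, f : I → (0,∞) be differentiable functions satisfying the generating ODEs e′(π)·(χ(π)−π)·(π+1) = π·e(π) and f′(π)·(χ(π)−π) = f(π) for all π ∈ I. On the open set D = {(ρ,p) ∈ ℝ² : ρ > 0, p/ρ ∈ I}, writing π = p/ρ, define the specific internal energy ε(ρ,p) = e(π) − 1, the temperature T(ρ,p) = (π/k)·e(π), the matter density r(ρ,p) = ρ/e(π), and the specific entropy s(ρ,p) = k·ln(f(π)/ρ). Then: (i) the ideal gas law p = k·r(ρ,p)·T(ρ,p) holds on D; and (ii) the Duhem–Gibbs relation T ds = dε + p d(1/r) holds on D, i.e. for every (ρ,p) ∈ D one has T·∂s/∂ρ = ∂ε/∂ρ + p·∂(1/r)/∂ρ and T·∂s/∂p = ∂ε/∂p + p·∂(1/r)/∂p. -/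
/-- Proposition 2 (ideal gas law and Duhem–Gibbs relation for the thermodynamic
quantities built from the generating functions `e` and `f`). -/
theorem stmt_0
    (k : ℝ) (hk : 0 < k)
    (I : Set ℝ) (hIint : ∃ a b : ℝ, I = Set.Ioo a b)
    (hIsub : I ⊆ Set.Ioi (-1 : ℝ))
    (χ e f : ℝ → ℝ)
    (hχ : ∀ π ∈ I, χ π ≠ π)
    (hepos : ∀ π ∈ I, 0 < e π)
    (hfpos : ∀ π ∈ I, 0 < f π)
    (he : ∀ π ∈ I, DifferentiableAt ℝ e π ∧
      deriv e π * (χ π - π) * (π + 1) = π * e π)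
    (hf : ∀ π ∈ I, DifferentiableAt ℝ f π ∧
      deriv f π * (χ π - π) = f π)
    -- the thermodynamic quantities on D
    (ε T r s : ℝ → ℝ → ℝ)
    (hε : ∀ ρ p : ℝ, ε ρ p = e (p / ρ) - 1)
    (hT : ∀ ρ p : ℝ, T ρ p = (p / ρ) / k * e (p / ρ))
    (hr : ∀ ρ p : ℝ, r ρ p = ρ / e (p / ρ))
    (hs : ∀ ρ p : ℝ, s ρ p = k * Real.log (f (p / ρ) / ρ)) :
    ∀ ρ p : ℝ, 0 < ρ → p / ρ ∈ I →
      -- (i) ideal gas law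
      (p = k * r ρ p * T ρ p) ∧
      -- (ii) Duhem–Gibbs relation, ρ-component and p-component
      (T ρ p * deriv (fun x => s x p) ρ =
        deriv (fun x => ε x p) ρ + p * deriv (fun x => (r x p)⁻¹) ρ) ∧
      (T ρ p * deriv (fun y => s ρ y) p =
        deriv (fun y => ε ρ y) p + p * deriv (fun y => (r ρ y)⁻¹) p) := by
  intro ρ p hρ hπI
  have hρ0 : ρ ≠ 0 := ne_of_gt hρ
  have hk0 : k ≠ 0 := ne_of_gt hk
  obtain ⟨hed, heode⟩ := he (p / ρ) hπI
  obtain ⟨hfd, hfode⟩ := hf (p / ρ) hπI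
  have he0 : e (p / ρ) ≠ 0 := ne_of_gt (hepos _ hπI)
  have hf0 : f (p / ρ) ≠ 0 := ne_of_gt (hfpos _ hπI)
  set A := deriv f (p / ρ) with hA
  set B := deriv e (p / ρ) with hB
  -- key algebraic identity from the two ODEs
  have key : B * (p / ρ + 1) * f (p / ρ) = A * (p / ρ) * e (p / ρ) := by
    calc B * (p / ρ + 1) * f (p / ρ)
        = B * (p / ρ + 1) * (A * (χ (p / ρ) - p / ρ)) := by rw [hfode]
      _ = A * (B * (χ (p / ρ) - p / ρ) * (p / ρ + 1)) := by ring
      _ = A * ((p / ρ) * e (p / ρ)) := by rw [heode]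
      _ = A * (p / ρ) * e (p / ρ) := by ring
  -- derivative of x ↦ p / x at ρ
  have hu : HasDerivAt (fun x : ℝ => p / x) ((0 * ρ - p * 1) / ρ ^ 2) ρ :=
    (hasDerivAt_const ρ p).div (hasDerivAt_id ρ) hρ0
  have hfu : HasDerivAt (fun x : ℝ => f (p / x)) (A * ((0 * ρ - p * 1) / ρ ^ 2)) ρ :=
    HasDerivAt.comp ρ hfd.hasDerivAt hu
  have heu : HasDerivAt (fun x : ℝ => e (p / x)) (B * ((0 * ρ - p * 1) / ρ ^ 2)) ρ :=
    HasDerivAt.comp ρ hed.hasDerivAt hu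
  -- derivative of y ↦ y / ρ at p
  have hv : HasDerivAt (fun y : ℝ => y / ρ) (1 / ρ) p := by
    simpa using (hasDerivAt_id p).div_const ρ
  have hfv : HasDerivAt (fun y : ℝ => f (y / ρ)) (A * (1 / ρ)) p :=
    HasDerivAt.comp p hfd.hasDerivAt hv
  have hev : HasDerivAt (fun y : ℝ => e (y / ρ)) (B * (1 / ρ)) p :=
    HasDerivAt.comp p hed.hasDerivAt hv
  -- deriv of s in ρ
  have hsρ : deriv (fun x => s x p) ρ =
      k * (((A * ((0 * ρ - p * 1) / ρ ^ 2)) * ρ - f (p / ρ) * 1) / ρ ^ 2 / (f (p / ρ) / ρ)) := by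
    have h1 : HasDerivAt (fun x : ℝ => f (p / x) / x)
        (((A * ((0 * ρ - p * 1) / ρ ^ 2)) * ρ - f (p / ρ) * 1) / ρ ^ 2) ρ :=
      hfu.div (hasDerivAt_id ρ) hρ0
    have h2 := (h1.log (by positivity)).const_mul k
    have h3 : (fun x => s x p) = fun x => k * Real.log (f (p / x) / x) := by
      funext x; rw [hs]
    rw [h3]
    exact h2.deriv
  -- deriv of s in p
  have hsp : deriv (fun y => s ρ y) p =
      k * ((A * (1 / ρ) / ρ) / (f (p / ρ) / ρ)) := by
    have h1 : HasDerivAt (fun y : ℝ => f (y / ρ) / ρ) (A * (1 / ρ) / ρ) p :=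
      hfv.div_const ρ
    have h2 := (h1.log (by positivity)).const_mul k
    have h3 : (fun y => s ρ y) = fun y => k * Real.log (f (y / ρ) / ρ) := by
      funext y; rw [hs]
    rw [h3]
    exact h2.deriv
  -- deriv of ε in ρ and p
  have hερ : deriv (fun x => ε x p) ρ = B * ((0 * ρ - p * 1) / ρ ^ 2) := by
    have h3 : (fun x => ε x p) = fun x => e (p / x) - 1 := by funext x; rw [hε]
    rw [h3]
    exact (heu.sub_const 1).deriv
  have hεp : deriv (fun y => ε ρ y) p = B * (1 / ρ) := by
    have h3 : (fun y => ε ρ y) = fun y => e (y / ρ) - 1 := by funext y; rw [hε]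
    rw [h3]
    exact (hev.sub_const 1).deriv
  -- deriv of 1/r in ρ and p
  have hrρ : deriv (fun x => (r x p)⁻¹) ρ =
      (B * ((0 * ρ - p * 1) / ρ ^ 2) * ρ - e (p / ρ) * 1) / ρ ^ 2 := by
    have h3 : (fun x => (r x p)⁻¹) = fun x => e (p / x) / x := by
      funext x; rw [hr, inv_div]
    rw [h3]
    exact (heu.div (hasDerivAt_id ρ) hρ0).deriv
  have hrp : deriv (fun y => (r ρ y)⁻¹) p = B * (1 / ρ) / ρ := by
    have h3 : (fun y => (r ρ y)⁻¹) = fun y => e (y / ρ) / ρ := by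
      funext y; rw [hr, inv_div]
    rw [h3]
    exact (hev.div_const ρ).deriv
  have key' : B * (p + ρ) * f (p / ρ) = A * p * e (p / ρ) := by
    field_simp at key
    linarith [key]
  refine ⟨?_, ?_, ?_⟩
  · rw [hr, hT]
    field_simp
  · rw [hT, hsρ, hερ, hrρ]
    field_simp
    linear_combination p * key'
  · rw [hT, hsp, hεp, hrp]
    field_simp
    linear_combination (-1 : ℝ) * key'
end

section
/- Let J ⊆ (0,∞) be an open interval, let ρ : J → (0,∞) be twice differentiable with ρ′(R) ≠ 0 for all R ∈ J, and let b : J → ℝ be twice differentiable with b′(R) ≠ 0 for all R ∈ J. Define a(R) = −R·ρ′(R)/(3ρ(R)), α(R,w) = (1 + (b(R) − R·b′(R))·w)/(1 + b(R)·w), and p(R,w) = −ρ(R) + a(R)·ρ(R)/α(R,w). Suppose a(R) ≠ 0 for all R ∈ J. Then for every R ∈ J and w ∈ ℝ with 1 + b(R)·w ≠ 0 and 1 + (b(R) − R·b′(R))·w ≠ 0, setting π = p(R,w)/ρ(R): (i) π = a(R)·(1 + b(R)·w)/(1 + (b(R) − R·b′(R))·w) − 1; and (ii) the indicatrix (∂p/∂R)(R,w)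 / ρ′(R) equals π + 1/3 − (1/3)·(π+1)·[ a′(R)·R/a(R)² + 1/a(R) + (π + 1 − a(R))·R·b′′(R)/(a(R)²·b′(R)) ]. -/
set_option maxHeartbeats 2000000 in
/-- Lemma 4: expressions of `π = p/ρ` and of the indicatrix `χ = ∂_R p / ∂_R ρ`
in a thermodynamic Stephani universe. -/
theorem stmt_1
    (J : Set ℝ) (hJint : ∃ u v : ℝ, J = Set.Ioo u v)
    (hJsub : J ⊆ Set.Ioi (0 : ℝ))
    (ρ b : ℝ → ℝ)
    (hρpos : ∀ R ∈ J, 0 < ρ R)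
    (hρdiff : ∀ R ∈ J, DifferentiableAt ℝ ρ R)
    (hρdiff2 : ∀ R ∈ J, DifferentiableAt ℝ (deriv ρ) R)
    (hρ' : ∀ R ∈ J, deriv ρ R ≠ 0)
    (hbdiff : ∀ R ∈ J, DifferentiableAt ℝ b R)
    (hbdiff2 : ∀ R ∈ J, DifferentiableAt ℝ (deriv b) R)
    (hb' : ∀ R ∈ J, deriv b R ≠ 0)
    (a : ℝ → ℝ) (ha : ∀ R, a R = -R * deriv ρ R / (3 * ρ R))
    (α : ℝ → ℝ → ℝ)
    (hα : ∀ R w, α R w = (1 + (b R - R * deriv b R) * w) / (1 + b R * w))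
    (p : ℝ → ℝ → ℝ)
    (hp : ∀ R w, p R w = -ρ R + a R * ρ R / α R w)
    (hane : ∀ R ∈ J, a R ≠ 0) :
    ∀ R ∈ J, ∀ w : ℝ, 1 + b R * w ≠ 0 → 1 + (b R - R * deriv b R) * w ≠ 0 →
      -- (i) expression of π = p/ρ
      p R w / ρ R = a R * (1 + b R * w) / (1 + (b R - R * deriv b R) * w) - 1 ∧
      -- (ii) expression of the indicatrix χ = (∂_R p)/(∂_R ρ)
      deriv (fun x => p x w) R / deriv ρ R =
        p R w / ρ R + 1/3 - (1/3) * (p R w / ρ R + 1) *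
          (deriv a R * R / (a R)^2 + 1 / a R +
            (p R w / ρ R + 1 - a R) * R * deriv (deriv b) R / ((a R)^2 * deriv b R)) := by
  intro R hR w hD hN
  have hR0 : (0:ℝ) < R := hJsub hR
  have hRne : R ≠ 0 := ne_of_gt hR0
  have hρ0 : ρ R ≠ 0 := (hρpos R hR).ne'
  have hρ1 : deriv ρ R ≠ 0 := hρ' R hR
  have hb1 : deriv b R ≠ 0 := hb' R hR
  have h3ρ : (3:ℝ) * ρ R ≠ 0 := by positivity
  have Hρ : HasDerivAt ρ (deriv ρ R) R := (hρdiff R hR).hasDerivAt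
  have Hρ2 : HasDerivAt (deriv ρ) (deriv (deriv ρ) R) R := (hρdiff2 R hR).hasDerivAt
  have Hb : HasDerivAt b (deriv b R) R := (hbdiff R hR).hasDerivAt
  have Hb2 : HasDerivAt (deriv b) (deriv (deriv b) R) R := (hbdiff2 R hR).hasDerivAt
  -- part (i)
  have hi : p R w / ρ R = a R * (1 + b R * w) / (1 + (b R - R * deriv b R) * w) - 1 := by
    rw [hp, hα]
    field_simp
    ring
  refine ⟨hi, ?_⟩
  -- derivative of a
  have HA : HasDerivAt (fun x => -x * deriv ρ x / (3 * ρ x))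
      (((-1 * deriv ρ R + -R * deriv (deriv ρ) R) * (3 * ρ R)
        - -R * deriv ρ R * (3 * deriv ρ R)) / (3 * ρ R) ^ 2) R :=
    (((hasDerivAt_id R).neg.mul Hρ2).div (Hρ.const_mul 3) h3ρ)
  have haeq : a = fun x => -x * deriv ρ x / (3 * ρ x) := funext ha
  have hda : deriv a R = ((-1 * deriv ρ R + -R * deriv (deriv ρ) R) * (3 * ρ R)
        - -R * deriv ρ R * (3 * deriv ρ R)) / (3 * ρ R) ^ 2 := by
    rw [haeq]; exact HA.deriv
  -- derivative of p
  have hfun : (fun x => p x w) = fun x =>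
      -ρ x + (-x * deriv ρ x / (3 * ρ x)) * ρ x
        / ((1 + (b x - x * deriv b x) * w) / (1 + b x * w)) := by
    funext x; rw [hp, ha, hα]
  have HNd : HasDerivAt (fun x => 1 + (b x - x * deriv b x) * w)
      ((deriv b R - (1 * deriv b R + R * deriv (deriv b) R)) * w) R :=
    ((Hb.sub ((hasDerivAt_id R).mul Hb2)).mul_const w).const_add 1
  have HDd : HasDerivAt (fun x => 1 + b x * w) (deriv b R * w) R :=
    (Hb.mul_const w).const_add 1
  have Hαd : HasDerivAt (fun x => (1 + (b x - x * deriv b x) * w) / (1 + b x * w))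
      (((deriv b R - (1 * deriv b R + R * deriv (deriv b) R)) * w * (1 + b R * w)
        - (1 + (b R - R * deriv b R) * w) * (deriv b R * w)) / (1 + b R * w) ^ 2) R :=
    HNd.div HDd hD
  have hαne : (1 + (b R - R * deriv b R) * w) / (1 + b R * w) ≠ 0 := div_ne_zero hN hD
  have HP := (Hρ.neg).add ((HA.mul Hρ).div Hαd hαne)
  have hderiv : deriv (fun x => -ρ x + (-x * deriv ρ x / (3 * ρ x)) * ρ x
      / ((1 + (b x - x * deriv b x) * w) / (1 + b x * w))) R = _ := HP.deriv
  simp only [Pi.mul_apply] at hderiv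
  rw [hfun, hderiv, hp, ha, hα, hda]
  field_simp
  ring
end

section
/- Let J ⊆ (0,∞) be an open interval, c₁, c₂ ∈ ℝ, and let a : J → ℝ be differentiable with a(R) ≠ 0 for all R, and b : J → ℝ twice differentiable with b′(R) ≠ 0 for all R. Suppose that for all R ∈ J: R·a′(R) = −a(R)·(c₁·a(R)² + c₂·a(R) + 1) and R·b′′(R) = −c₁·a(R)²·b′(R). Then for every R ∈ J and every π ∈ ℝ, π + 1/3 − (1/3)·(π+1)·[ a′(R)·R/a(R)² + 1/a(R) + (π + 1 − a(R))·R·b′′(R)/(a(R)²·b′(R)) ] = β·π² + γ·π + δ, where β = c₁/3, γ = 1 + (c₂ + 2c₁)/3, and δ = (c₁ + c₂ + 1)/3. -/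
/-!
The equations of Theorem 1 express `Ra′` and `Rb″` through `a` and `b′`, which turns the terms of
the bracket into `a′R/a² + 1/a = -(c₁a + c₂)` and `Rb″/(a²b′) = -c₁`. The bracket is then
`-(c₁a + c₂) - c₁(π + 1 - a) = -(c₁(π + 1) + c₂)`, in which `a` cancels, leaving a quadratic
polynomial in `π`.
-/

lemma mul_div_sq_add_one_div_eq_neg {c₁ c₂ R a a' : ℝ} (ha : a ≠ 0)
    (h : R * a' = -a * (c₁ * a ^ 2 + c₂ * a + 1)) :
    a' * R / a ^ 2 + 1 / a = -(c₁ * a + c₂) := by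
  field_simp
  linear_combination h

lemma mul_div_sq_mul_eq_neg {c₁ R a b' b'' : ℝ} (ha : a ≠ 0) (hb : b' ≠ 0)
    (h : R * b'' = -c₁ * a ^ 2 * b') :
    R * b'' / (a ^ 2 * b') = -c₁ := by
  rw [h]
  field_simp

theorem stmt_3_general
    (J : Set ℝ)
    (c₁ c₂ : ℝ)
    (a b : ℝ → ℝ)
    (hane : ∀ R ∈ J, a R ≠ 0)
    (hb' : ∀ R ∈ J, deriv b R ≠ 0)
    (heq1 : ∀ R ∈ J, R * deriv a R = -a R * (c₁ * (a R)^2 + c₂ * a R + 1))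
    (heq2 : ∀ R ∈ J, R * deriv (deriv b) R = -c₁ * (a R)^2 * deriv b R) :
    ∀ R ∈ J, ∀ π : ℝ,
      π + 1/3 - (1/3) * (π + 1) *
        (deriv a R * R / (a R)^2 + 1 / a R +
          (π + 1 - a R) * R * deriv (deriv b) R / ((a R)^2 * deriv b R)) =
      (c₁ / 3) * π^2 + (1 + (c₂ + 2 * c₁) / 3) * π + (c₁ + c₂ + 1) / 3 := by
  intro R hR π
  have hbracket₁ := mul_div_sq_add_one_div_eq_neg (hane R hR) (heq1 R hR)
  have hbracket₂ := mul_div_sq_mul_eq_neg (hane R hR) (hb' R hR) (heq2 R hR)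
  linear_combination (-(1 / 3) * (π + 1)) * hbracket₁ +
    (-(1 / 3) * (π + 1) * (π + 1 - a R)) * hbracket₂

/-- Proposition 4: under the two equations of Theorem 1, the indicatrix of an ideal gas
Stephani universe reduces to the quadratic polynomial `βπ² + γπ + δ`. -/
theorem stmt_3
    (J : Set ℝ) (hJint : ∃ u v : ℝ, J = Set.Ioo u v)
    (hJsub : J ⊆ Set.Ioi (0 : ℝ))
    (c₁ c₂ : ℝ)
    (a b : ℝ → ℝ)
    (hadiff : ∀ R ∈ J, DifferentiableAt ℝ a R)
    (hane : ∀ R ∈ J, a R ≠ 0)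
    (hbdiff : ∀ R ∈ J, DifferentiableAt ℝ b R)
    (hbdiff2 : ∀ R ∈ J, DifferentiableAt ℝ (deriv b) R)
    (hb' : ∀ R ∈ J, deriv b R ≠ 0)
    (heq1 : ∀ R ∈ J, R * deriv a R = -a R * (c₁ * (a R)^2 + c₂ * a R + 1))
    (heq2 : ∀ R ∈ J, R * deriv (deriv b) R = -c₁ * (a R)^2 * deriv b R) :
    ∀ R ∈ J, ∀ π : ℝ,
      π + 1/3 - (1/3) * (π + 1) *
        (deriv a R * R / (a R)^2 + 1 / a R +
          (π + 1 - a R) * R * deriv (deriv b) R / ((a R)^2 * deriv b R)) =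
      (c₁ / 3) * π^2 + (1 + (c₂ + 2 * c₁) / 3) * π + (c₁ + c₂ + 1) / 3 :=
  stmt_3_general J c₁ c₂ a b hane hb' heq1 heq2
end

section
/- Let f₀, e₀ > 0 and define the reduced indicatrix χ̄(π) = 1/3 on the interval (−1,∞). Then the functions f(π) = f₀·exp(3π) and e(π) = e₀·exp(3π)/(π+1)³ are differentiable on (−1,∞) and satisfy the generating ODEs f′(π)·χ̄(π) = f(π) and e′(π)·χ̄(π)·(π+1) = π·e(π) for all π ∈ (−1,∞). -/
/-- Class 1 of Proposition 5 (`c₁ = c₂ = 0`, reduced indicatrix `χ̄(π) = 1/3`):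
the generating functions `f(π) = f₀ e^{3π}` and `e(π) = e₀ e^{3π}/(π+1)³` satisfy the
generating ODEs on `(-1, ∞)`. -/
theorem stmt_4
    (f₀ e₀ : ℝ) (hf₀ : 0 < f₀) (he₀ : 0 < e₀)
    (χbar f e : ℝ → ℝ)
    (hχbar : ∀ π : ℝ, χbar π = 1/3)
    (hfdef : ∀ π : ℝ, f π = f₀ * Real.exp (3 * π))
    (hedef : ∀ π : ℝ, e π = e₀ * Real.exp (3 * π) / (π + 1)^3) :
    ∀ π ∈ Set.Ioi (-1 : ℝ),
      DifferentiableAt ℝ f π ∧ DifferentiableAt ℝ e π ∧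
      deriv f π * χbar π = f π ∧
      deriv e π * χbar π * (π + 1) = π * e π := by
  have hf : f = fun x : ℝ => f₀ * Real.exp (3 * x) := funext hfdef
  have he : e = fun x : ℝ => e₀ * Real.exp (3 * x) / (x + 1)^3 := funext hedef
  intro x hx
  have hx1 : (0:ℝ) < x + 1 := by
    simp only [Set.mem_Ioi] at hx; linarith
  have hx1' : (x + 1 : ℝ) ≠ 0 := ne_of_gt hx1
  have hexp : HasDerivAt (fun y : ℝ => Real.exp (3 * y)) (Real.exp (3 * x) * 3) x := by
    have h3 : HasDerivAt (fun y : ℝ => 3 * y) 3 x := by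
      simpa using (hasDerivAt_id x).const_mul 3
    exact h3.exp
  have hfD : HasDerivAt f (f₀ * (Real.exp (3 * x) * 3)) x := by
    rw [hf]; exact hexp.const_mul f₀
  have hnum : HasDerivAt (fun y : ℝ => e₀ * Real.exp (3 * y)) (e₀ * (Real.exp (3 * x) * 3)) x :=
    hexp.const_mul e₀
  have hden : HasDerivAt (fun y : ℝ => (y + 1)^3) (3 * (x + 1)^2 * 1) x := by
    have : HasDerivAt (fun y : ℝ => y + 1) 1 x := (hasDerivAt_id x).add_const 1
    simpa using this.fun_pow 3
  have hneq : ((x:ℝ) + 1)^3 ≠ 0 := pow_ne_zero _ hx1'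
  have heD : HasDerivAt e
      ((e₀ * (Real.exp (3 * x) * 3) * (x + 1)^3 -
        e₀ * Real.exp (3 * x) * (3 * (x + 1)^2 * 1)) / ((x + 1)^3)^2) x := by
    rw [he]; exact hnum.div hden hneq
  refine ⟨hfD.differentiableAt, heD.differentiableAt, ?_, ?_⟩
  · rw [hfD.deriv, hχbar, hfdef]; ring
  · rw [heD.deriv, hχbar, hedef]
    field_simp
    ring
end

section
/- Let c₂ ≠ 0, f₀, e₀ > 0, and define the reduced indicatrix χ̄(π) = (c₂·(π+1) + 1)/3. Let I ⊆ (−1,∞) be an open interval on which c₂·(π+1) + 1 > 0. Then the functions f(π) = f₀·(c₂(π+1)+1)^(3/c₂) and e(π) = e₀·(π+1)^(−3)·(c₂(π+1)+1)^(3(1+1/c₂)) are differentiable on I and satisfy the generating ODEs f′(π)·χ̄(π) = f(π) and e′(π)·χ̄(π)·(π+1) = π·e(π) for all π ∈ I. -/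
/-- Class 2 of Proposition 5 (`c₁ = 0`, `c₂ ≠ 0`, reduced indicatrix
`χ̄(π) = (c₂(π+1)+1)/3`): the generating functions satisfy the generating ODEs. -/
theorem stmt_5
    (c₂ : ℝ) (hc₂ : c₂ ≠ 0)
    (f₀ e₀ : ℝ) (hf₀ : 0 < f₀) (he₀ : 0 < e₀)
    (I : Set ℝ) (hIint : ∃ u v : ℝ, I = Set.Ioo u v)
    (hIsub : I ⊆ Set.Ioi (-1 : ℝ))
    (hIpos : ∀ π ∈ I, 0 < c₂ * (π + 1) + 1)
    (χbar f e : ℝ → ℝ)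
    (hχbar : ∀ π : ℝ, χbar π = (c₂ * (π + 1) + 1) / 3)
    (hfdef : ∀ π : ℝ, f π = f₀ * (c₂ * (π + 1) + 1) ^ (3 / c₂))
    (hedef : ∀ π : ℝ, e π =
      e₀ * (π + 1) ^ (-3 : ℝ) * (c₂ * (π + 1) + 1) ^ (3 * (1 + 1 / c₂))) :
    ∀ π ∈ I,
      DifferentiableAt ℝ f π ∧ DifferentiableAt ℝ e π ∧
      deriv f π * χbar π = f π ∧
      deriv e π * χbar π * (π + 1) = π * e π := by
  intro π hπ
  have hπ1 : 0 < π + 1 := by have := hIsub hπ; simp at this; linarith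
  have hb : 0 < c₂ * (π + 1) + 1 := hIpos π hπ
  set b : ℝ := c₂ * (π + 1) + 1 with hbdef
  -- derivative of the base
  have hbase : HasDerivAt (fun x : ℝ => c₂ * (x + 1) + 1) c₂ π := by
    have h := (((hasDerivAt_id π).add_const 1).const_mul c₂).add_const 1
    simpa using h
  have hlin : HasDerivAt (fun x : ℝ => x + 1) 1 π := (hasDerivAt_id π).add_const 1
  -- f
  have hfeq : f = fun x => f₀ * (c₂ * (x + 1) + 1) ^ (3 / c₂) := funext hfdef
  have hf : HasDerivAt f (f₀ * (c₂ * (3 / c₂) * b ^ (3 / c₂ - 1))) π := by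
    rw [hfeq]
    exact (hbase.rpow_const (Or.inl hb.ne')).const_mul f₀
  -- e
  have heeq : e = fun x =>
      e₀ * (x + 1) ^ (-3 : ℝ) * (c₂ * (x + 1) + 1) ^ (3 * (1 + 1 / c₂)) :=
    funext hedef
  have h1 : HasDerivAt (fun x : ℝ => e₀ * (x + 1) ^ (-3 : ℝ))
      (e₀ * (1 * (-3) * (π + 1) ^ ((-3 : ℝ) - 1))) π :=
    (hlin.rpow_const (Or.inl hπ1.ne')).const_mul e₀
  have h2 : HasDerivAt (fun x : ℝ => (c₂ * (x + 1) + 1) ^ (3 * (1 + 1 / c₂)))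
      (c₂ * (3 * (1 + 1 / c₂)) * b ^ (3 * (1 + 1 / c₂) - 1)) π :=
    hbase.rpow_const (Or.inl hb.ne')
  have he : HasDerivAt e
      (e₀ * (1 * (-3) * (π + 1) ^ ((-3 : ℝ) - 1)) * b ^ (3 * (1 + 1 / c₂))
        + e₀ * (π + 1) ^ (-3 : ℝ) * (c₂ * (3 * (1 + 1 / c₂)) * b ^ (3 * (1 + 1 / c₂) - 1))) π := by
    rw [heeq]
    exact h1.mul h2
  refine ⟨hf.differentiableAt, he.differentiableAt, ?_, ?_⟩
  · rw [hf.deriv, hχbar, hfdef, ← hbdef,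
      show 3 / c₂ - 1 = 3 / c₂ + (-1) by ring, Real.rpow_add hb, Real.rpow_neg_one]
    field_simp
  · rw [he.deriv, hχbar, hedef, ← hbdef,
      show 3 * (1 + 1 / c₂) - 1 = 3 * (1 + 1 / c₂) + (-1) by ring,
      show (-3 : ℝ) - 1 = (-3 : ℝ) + (-1) by ring,
      Real.rpow_add hb, Real.rpow_add hπ1, Real.rpow_neg_one, Real.rpow_neg_one]
    field_simp
    ring
end

section
/- Let c₂ ≠ 0, set c₁ = c₂²/4 (so that Δ = c₂² − 4c₁ = 0), let f₀, e₀ > 0, and define the reduced indicatrix χ̄(π) = (1/12)·(c₂·(π+1) + 2)². Let I ⊆ (−1,∞) be an open interval on which c₂·(π+1) + 2 ≠ 0. Then the functions f(π) = f₀·exp( −12/(c₂·(c₂(π+1)+2)) ) and e(π) = e₀·(c₂(π+1)+2)³·(π+1)^(−3)·exp( −6(c₂+2)/(c₂·(c₂(π+1)+2)) ) are differentiable on I and satisfy the generating ODEs f′(π)·χ̄(π) = f(π) and e′(π)·χ̄(π)·(π+1) = π·e(π) for all π ∈ I. -/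
/-!
Both generating functions are exponentials of explicit primitives, so each ODE is a statement
about a logarithmic derivative. With `D = c₂(π+1)+2` one has `(log f)' = 12/D²`, which is
exactly `1/χ̄`, and `(log e)' = 3c₂/D − 3/(π+1) + 6(c₂+2)/D²`; multiplying the latter by
`χ̄·(π+1) = D²(π+1)/12` gives `π`, a polynomial identity in `π`.
-/

noncomputable section

def generatingF (c₂ f₀ x : ℝ) : ℝ :=
  f₀ * Real.exp (-12 / (c₂ * (c₂ * (x + 1) + 2)))

def generatingE (c₂ e₀ x : ℝ) : ℝ :=
  e₀ * (c₂ * (x + 1) + 2) ^ 3 * (x + 1) ^ (-3 : ℝ) *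
    Real.exp (-(6 * (c₂ + 2)) / (c₂ * (c₂ * (x + 1) + 2)))

end

theorem hasDerivAt_affine (c x : ℝ) : HasDerivAt (fun y : ℝ => c * (y + 1) + 2) c x := by
  simpa using (((hasDerivAt_id x).add_const 1).const_mul c).add_const 2

section

variable {c : ℝ} {x : ℝ}

theorem hasDerivAt_exp_div_affine (k : ℝ) (hc : c ≠ 0) (hD : c * (x + 1) + 2 ≠ 0) :
    HasDerivAt (fun y => Real.exp (k / (c * (c * (y + 1) + 2))))
      (Real.exp (k / (c * (c * (x + 1) + 2))) * (-k / (c * (x + 1) + 2) ^ 2)) x := by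
  have h := ((hasDerivAt_const x k).fun_div ((hasDerivAt_affine c x).const_mul c)
    (mul_ne_zero hc hD)).exp
  convert h using 2
  field_simp
  ring

theorem hasDerivAt_generatingF (f₀ : ℝ) (hc : c ≠ 0) (hD : c * (x + 1) + 2 ≠ 0) :
    HasDerivAt (generatingF c f₀) (generatingF c f₀ x * (12 / (c * (x + 1) + 2) ^ 2)) x :=
  ((hasDerivAt_exp_div_affine (-12) hc hD).const_mul f₀).congr_deriv <| by
    unfold generatingF
    ring

theorem hasDerivAt_generatingE (e₀ : ℝ) (hc : c ≠ 0) (hD : c * (x + 1) + 2 ≠ 0)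
    (hx : 0 < x + 1) :
    HasDerivAt (generatingE c e₀) (generatingE c e₀ x *
      (3 * c / (c * (x + 1) + 2) - 3 / (x + 1) + 6 * (c + 2) / (c * (x + 1) + 2) ^ 2)) x := by
  have hcube : HasDerivAt (fun y => e₀ * (c * (y + 1) + 2) ^ 3)
      (e₀ * (3 * (c * (x + 1) + 2) ^ 2 * c)) x := by
    simpa using ((hasDerivAt_affine c x).fun_pow 3).const_mul e₀
  have hrpow : HasDerivAt (fun y : ℝ => (y + 1) ^ (-3 : ℝ)) (-3 * (x + 1) ^ ((-3 : ℝ) - 1)) x := by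
    simpa using ((hasDerivAt_id x).add_const 1).rpow_const (p := -3) (Or.inl hx.ne')
  have hexp := hasDerivAt_exp_div_affine (-(6 * (c + 2))) hc hD
  refine ((hcube.fun_mul hrpow).fun_mul hexp).congr_deriv ?_
  have hrpow_sub : (x + 1) ^ ((-3 : ℝ) - 1) = (x + 1) ^ (-3 : ℝ) / (x + 1) := by
    rw [Real.rpow_sub hx, Real.rpow_one]
  unfold generatingE
  rw [hrpow_sub]
  generalize (x + 1) ^ (-3 : ℝ) = r
  generalize Real.exp _ = E
  field_simp
  ring

theorem generatingF_ode (f₀ : ℝ) (hc : c ≠ 0) (hD : c * (x + 1) + 2 ≠ 0) :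
    deriv (generatingF c f₀) x * ((1 / 12) * (c * (x + 1) + 2) ^ 2) = generatingF c f₀ x := by
  rw [(hasDerivAt_generatingF f₀ hc hD).deriv]
  field_simp

theorem generatingE_ode (e₀ : ℝ) (hc : c ≠ 0) (hD : c * (x + 1) + 2 ≠ 0) (hx : 0 < x + 1) :
    deriv (generatingE c e₀) x * ((1 / 12) * (c * (x + 1) + 2) ^ 2) * (x + 1) =
      x * generatingE c e₀ x := by
  rw [(hasDerivAt_generatingE e₀ hc hD hx).deriv]
  field_simp
  ring

end

theorem stmt_6_general
    (c₂ : ℝ) (hc₂ : c₂ ≠ 0)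
    (f₀ e₀ : ℝ)
    (I : Set ℝ)
    (hIsub : I ⊆ Set.Ioi (-1 : ℝ))
    (hIne : ∀ π ∈ I, c₂ * (π + 1) + 2 ≠ 0)
    (χbar f e : ℝ → ℝ)
    (hχbar : ∀ π : ℝ, χbar π = (1/12) * (c₂ * (π + 1) + 2)^2)
    (hfdef : ∀ π : ℝ, f π = f₀ * Real.exp (-12 / (c₂ * (c₂ * (π + 1) + 2))))
    (hedef : ∀ π : ℝ, e π =
      e₀ * (c₂ * (π + 1) + 2)^3 * (π + 1) ^ (-3 : ℝ) *
        Real.exp (-(6 * (c₂ + 2)) / (c₂ * (c₂ * (π + 1) + 2)))) :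
    ∀ π ∈ I,
      DifferentiableAt ℝ f π ∧ DifferentiableAt ℝ e π ∧
      deriv f π * χbar π = f π ∧
      deriv e π * χbar π * (π + 1) = π * e π := by
  intro π hπ
  have hf : f = generatingF c₂ f₀ := funext hfdef
  have he : e = generatingE c₂ e₀ := funext hedef
  have hs : 0 < π + 1 := neg_lt_iff_pos_add.mp (hIsub hπ)
  have hD := hIne π hπ
  subst hf he
  rw [hχbar]
  exact ⟨(hasDerivAt_generatingF f₀ hc₂ hD).differentiableAt,
    (hasDerivAt_generatingE e₀ hc₂ hD hs).differentiableAt,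
    generatingF_ode f₀ hc₂ hD, generatingE_ode e₀ hc₂ hD hs⟩

/-- Class 3 of Proposition 5 (`Δ = c₂² − 4c₁ = 0`, `c₁ = c₂²/4 ≠ 0`, reduced indicatrix
`χ̄(π) = (c₂(π+1)+2)²/12`): the generating functions satisfy the generating ODEs. -/
theorem stmt_6
    (c₂ : ℝ) (hc₂ : c₂ ≠ 0)
    (c₁ : ℝ) (hc₁ : c₁ = c₂^2 / 4)
    (f₀ e₀ : ℝ) (hf₀ : 0 < f₀) (he₀ : 0 < e₀)
    (I : Set ℝ) (hIint : ∃ u v : ℝ, I = Set.Ioo u v)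
    (hIsub : I ⊆ Set.Ioi (-1 : ℝ))
    (hIne : ∀ π ∈ I, c₂ * (π + 1) + 2 ≠ 0)
    (χbar f e : ℝ → ℝ)
    (hχbar : ∀ π : ℝ, χbar π = (1/12) * (c₂ * (π + 1) + 2)^2)
    (hfdef : ∀ π : ℝ, f π = f₀ * Real.exp (-12 / (c₂ * (c₂ * (π + 1) + 2))))
    (hedef : ∀ π : ℝ, e π =
      e₀ * (c₂ * (π + 1) + 2)^3 * (π + 1) ^ (-3 : ℝ) *
        Real.exp (-(6 * (c₂ + 2)) / (c₂ * (c₂ * (π + 1) + 2)))) :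
    ∀ π ∈ I,
      DifferentiableAt ℝ f π ∧ DifferentiableAt ℝ e π ∧
      deriv f π * χbar π = f π ∧
      deriv e π * χbar π * (π + 1) = π * e π :=
  stmt_6_general c₂ hc₂ f₀ e₀ I hIsub hIne χbar f e hχbar hfdef hedef
end

section
/- Let c₁, c₂ be real with Δ = c₂² − 4c₁ < 0 (hence c₁ > 0), let f₀, e₀ > 0, and define the reduced indicatrix χ̄(π) = (1/3)·(c₁·(π+1)² + c₂·(π+1) + 1), which is strictly positive for all π. Then the functions f(π) = f₀·exp( (6/√(−Δ))·arctan((2c₁(π+1)+c₂)/√(−Δ)) ) and e(π) = e₀·χ̄(π)^(3/2)·(π+1)^(−3)·exp( (3(c₂+2)/√(−Δ))·arctan((2c₁(π+1)+c₂)/√(−Δ)) ) are differentiable on (−1,∞) and satisfy the generating ODEs f′(π)·χ̄(π) = f(π) and e′(π)·χ̄(π)·(π+1) = π·e(π) for all π ∈ (−1,∞). -/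
/-- Class 5 of Proposition 5 (`Δ = c₂² − 4c₁ < 0`, hence `c₁ > 0` and the reduced
indicatrix `χ̄(π) = (c₁(π+1)² + c₂(π+1) + 1)/3` is strictly positive): the generating
functions satisfy the generating ODEs on `(-1, ∞)`. -/
theorem stmt_8
    (c₁ c₂ : ℝ)
    (Δ : ℝ) (hΔdef : Δ = c₂^2 - 4 * c₁) (hΔ : Δ < 0)
    (f₀ e₀ : ℝ) (hf₀ : 0 < f₀) (he₀ : 0 < e₀)
    (χbar f e : ℝ → ℝ)
    (hχbar : ∀ π : ℝ, χbar π = (1/3) * (c₁ * (π + 1)^2 + c₂ * (π + 1) + 1))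
    (hfdef : ∀ π : ℝ, f π = f₀ * Real.exp ((6 / Real.sqrt (-Δ)) *
      Real.arctan ((2 * c₁ * (π + 1) + c₂) / Real.sqrt (-Δ))))
    (hedef : ∀ π : ℝ, e π = e₀ * (χbar π) ^ (3/2 : ℝ) * (π + 1) ^ (-3 : ℝ) *
      Real.exp ((3 * (c₂ + 2) / Real.sqrt (-Δ)) *
        Real.arctan ((2 * c₁ * (π + 1) + c₂) / Real.sqrt (-Δ)))) :
    0 < c₁ ∧ (∀ π : ℝ, 0 < χbar π) ∧
    ∀ π ∈ Set.Ioi (-1 : ℝ),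
      DifferentiableAt ℝ f π ∧ DifferentiableAt ℝ e π ∧
      deriv f π * χbar π = f π ∧
      deriv e π * χbar π * (π + 1) = π * e π := by
  have hc₁ : 0 < c₁ := by nlinarith [sq_nonneg c₂]
  have hχpos : ∀ π : ℝ, 0 < χbar π := by
    intro π
    rw [hχbar]
    nlinarith [sq_nonneg (2*c₁*(π+1)+c₂)]
  refine ⟨hc₁, hχpos, ?_⟩
  intro π hπ
  have hx : 0 < π + 1 := by have : (-1:ℝ) < π := hπ; linarith
  have hχ : 0 < χbar π := hχpos π
  have hχne : χbar π ≠ 0 := ne_of_gt hχ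
  set s := Real.sqrt (-Δ) with hsdef
  have hs : 0 < s := Real.sqrt_pos.mpr (by linarith)
  have hsne : s ≠ 0 := ne_of_gt hs
  have hs2 : s^2 = 4*c₁ - c₂^2 := by
    rw [hsdef, Real.sq_sqrt (by linarith : (0:ℝ) ≤ -Δ), hΔdef]; ring
  -- derivative of the inner affine function
  have hg : HasDerivAt (fun t : ℝ => (2*c₁*(t+1)+c₂)/s) (2*c₁/s) π := by
    have h1 : HasDerivAt (fun t : ℝ => 2*c₁*(t+1)+c₂) (2*c₁) π := by
      have := (((hasDerivAt_id π).add_const (1:ℝ)).const_mul (2*c₁)).add_const c₂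
      simpa using this
    exact h1.div_const s
  -- derivative of arctan composite
  have hA : HasDerivAt (fun t : ℝ => Real.arctan ((2*c₁*(t+1)+c₂)/s))
      (s/(6*χbar π)) π := by
    have h := (Real.hasDerivAt_arctan ((2*c₁*(π+1)+c₂)/s)).comp π hg
    have key : 1 + ((2*c₁*(π+1)+c₂)/s)^2 = 12*c₁*(χbar π)/s^2 := by
      rw [hχbar]
      field_simp
      nlinarith [hs2]
    refine h.congr_deriv ?_
    rw [key]
    field_simp
    ring
  -- f part
  have hfF : f = fun t : ℝ => f₀ * Real.exp ((6/s) *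
      Real.arctan ((2*c₁*(t+1)+c₂)/s)) := funext hfdef
  have hF : HasDerivAt f (f₀ * (Real.exp ((6/s) *
      Real.arctan ((2*c₁*(π+1)+c₂)/s)) * ((6/s) * (s/(6*χbar π))))) π := by
    rw [hfF]
    exact ((hA.const_mul (6/s)).exp).const_mul f₀
  -- e part
  have hχF : χbar = fun t : ℝ => (1/3) * (c₁ * (t + 1)^2 + c₂ * (t + 1) + 1) :=
    funext hχbar
  have hχd : HasDerivAt χbar ((1/3)*(2*c₁*(π+1)+c₂)) π := by
    rw [hχF]
    have h := ((((((hasDerivAt_id π).add_const (1:ℝ)).pow 2).const_mul c₁).add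
      (((hasDerivAt_id π).add_const (1:ℝ)).const_mul c₂)).add_const (1:ℝ)).const_mul
      ((1:ℝ)/3)
    refine h.congr_deriv ?_
    simp
    ring
  have h1 : HasDerivAt (fun t : ℝ => e₀ * χbar t ^ (3/2 : ℝ))
      (e₀ * (((1/3)*(2*c₁*(π+1)+c₂)) * (3/2) * χbar π ^ ((3/2 : ℝ) - 1))) π :=
    (hχd.rpow_const (Or.inl hχne)).const_mul e₀
  have h2 : HasDerivAt (fun t : ℝ => (t + 1) ^ (-3 : ℝ))
      (1 * (-3) * (π + 1) ^ ((-3 : ℝ) - 1)) π :=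
    ((hasDerivAt_id π).add_const (1:ℝ)).rpow_const (Or.inl hx.ne')
  have h3 : HasDerivAt (fun t : ℝ => Real.exp ((3*(c₂+2)/s) *
      Real.arctan ((2*c₁*(t+1)+c₂)/s)))
      (Real.exp ((3*(c₂+2)/s) * Real.arctan ((2*c₁*(π+1)+c₂)/s)) *
        ((3*(c₂+2)/s) * (s/(6*χbar π)))) π :=
    (hA.const_mul (3*(c₂+2)/s)).exp
  have heF : e = fun t : ℝ => e₀ * χbar t ^ (3/2 : ℝ) * (t + 1) ^ (-3 : ℝ) *
      Real.exp ((3*(c₂+2)/s) * Real.arctan ((2*c₁*(t+1)+c₂)/s)) := funext hedef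
  have hE : HasDerivAt e
      ((e₀ * (((1/3)*(2*c₁*(π+1)+c₂)) * (3/2) * χbar π ^ ((3/2 : ℝ) - 1)) *
          (π + 1) ^ (-3 : ℝ) +
        e₀ * χbar π ^ (3/2 : ℝ) * (1 * (-3) * (π + 1) ^ ((-3 : ℝ) - 1))) *
        Real.exp ((3*(c₂+2)/s) * Real.arctan ((2*c₁*(π+1)+c₂)/s)) +
        e₀ * χbar π ^ (3/2 : ℝ) * (π + 1) ^ (-3 : ℝ) *
          (Real.exp ((3*(c₂+2)/s) * Real.arctan ((2*c₁*(π+1)+c₂)/s)) *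
            ((3*(c₂+2)/s) * (s/(6*χbar π))))) π := by
    rw [heF]
    exact (h1.mul h2).mul h3
  refine ⟨hF.differentiableAt, hE.differentiableAt, ?_, ?_⟩
  · rw [hF.deriv, hfdef π]
    field_simp
  · rw [hE.deriv, hedef π]
    have hK32 : χbar π ^ (3/2 : ℝ) = χbar π ^ (1/2 : ℝ) * χbar π := by
      rw [show (3/2 : ℝ) = 1/2 + 1 by norm_num, Real.rpow_add hχ, Real.rpow_one]
    have hK12 : ((3/2 : ℝ) - 1) = (1/2 : ℝ) := by norm_num
    have hX3 : (π+1) ^ (-3 : ℝ) = (π+1) ^ (-4 : ℝ) * (π+1) := by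
      rw [show (-3 : ℝ) = -4 + 1 by norm_num, Real.rpow_add hx, Real.rpow_one]
    have hX4 : ((-3 : ℝ) - 1) = (-4 : ℝ) := by norm_num
    rw [hK12, hX4, hK32, hX3]
    set P := χbar π ^ (1/2 : ℝ) with hP
    set Q := (π+1) ^ (-4 : ℝ) with hQ
    set E := Real.exp ((3*(c₂+2)/s) * Real.arctan ((2*c₁*(π+1)+c₂)/s)) with hEdef
    have hpoly : c₁ * (π + 1)^2 + c₂ * (π + 1) + 1 ≠ 0 := by
      have := hχ; rw [hχbar] at this; intro h; rw [h] at this; simp at this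
    rw [hχbar π]
    have hpoly' : (π + 1) * (c₁ * (π + 1) + c₂) + 1 ≠ 0 := by
      intro h; apply hpoly; linear_combination h
    field_simp
    ring
end

section
/- Let J ⊆ (0,∞) be an open interval, c₁, c₂ ∈ ℝ, and q(x) = c₁x² + c₂x + 1. Let a : J → ℝ be twice differentiable with a(R) ≠ 0 and a′(R) ≠ 0 for all R ∈ J, and suppose R·a′(R) = −a(R)·q(a(R)) for all R ∈ J. Let b : J → ℝ be twice differentiable with b′(R) ≠ 0 for all R ∈ J. Then the equation R·b′′(R) = −c₁·a(R)²·b′(R) holds for all R ∈ J if and only if there exist constants b₁ and b₂ ≠ 0 such that b(R) = b₂/a(R) + b₁ for all R ∈ J. -/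
private lemma my_const_aux {u v : ℝ} {f : ℝ → ℝ}
    (hf : ∀ x ∈ Set.Ioo u v, HasDerivAt f 0 x) {x y : ℝ}
    (hx : x ∈ Set.Ioo u v) (hy : y ∈ Set.Ioo u v) : f x = f y := by
  have h := Convex.norm_image_sub_le_of_norm_hasDerivWithin_le (C := 0)
    (f' := fun _ => (0:ℝ)) (fun z hz => (hf z hz).hasDerivWithinAt)
    (fun z _ => by simp) (convex_Ioo u v) hy hx
  rw [zero_mul] at h
  have h0 : f x - f y = 0 := norm_le_zero_iff.mp h
  linarith

/-- Proposition 7 (regular ideal gas Stephani models): given `R a′ = −a q(a)` with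
`a ≠ 0`, `a′ ≠ 0`, the equation `R b″ = −c₁ a² b′` holds iff `b = b₂/a + b₁`. -/
theorem stmt_11
    (J : Set ℝ) (hJint : ∃ u v : ℝ, J = Set.Ioo u v)
    (hJsub : J ⊆ Set.Ioi (0 : ℝ))
    (c₁ c₂ : ℝ) (q : ℝ → ℝ) (hq : ∀ x : ℝ, q x = c₁ * x^2 + c₂ * x + 1)
    (a : ℝ → ℝ)
    (hadiff : ∀ R ∈ J, DifferentiableAt ℝ a R)
    (hadiff2 : ∀ R ∈ J, DifferentiableAt ℝ (deriv a) R)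
    (hane : ∀ R ∈ J, a R ≠ 0)
    (ha' : ∀ R ∈ J, deriv a R ≠ 0)
    (haeq : ∀ R ∈ J, R * deriv a R = -a R * q (a R))
    (b : ℝ → ℝ)
    (hbdiff : ∀ R ∈ J, DifferentiableAt ℝ b R)
    (hbdiff2 : ∀ R ∈ J, DifferentiableAt ℝ (deriv b) R)
    (hb' : ∀ R ∈ J, deriv b R ≠ 0) :
    (∀ R ∈ J, R * deriv (deriv b) R = -c₁ * (a R)^2 * deriv b R) ↔
    ∃ b₁ b₂ : ℝ, b₂ ≠ 0 ∧ ∀ R ∈ J, b R = b₂ / a R + b₁ := by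
  obtain ⟨u, v, rfl⟩ := hJint
  set J := Set.Ioo u v with hJ
  have hJopen : IsOpen J := isOpen_Ioo
  have hRne : ∀ R ∈ J, R ≠ 0 := fun R hR => ne_of_gt (hJsub hR)
  -- Key fact: R * a'' = -(a') * (3c₁a² + 2c₂a + 2)
  have key_a : ∀ R ∈ J, R * deriv (deriv a) R
      = -(deriv a R) * (3*c₁*(a R)^2 + 2*c₂*(a R) + 2) := by
    intro R hR
    have hmem : J ∈ nhds R := hJopen.mem_nhds hR
    have hA := (hadiff R hR).hasDerivAt
    have hA' := (hadiff2 R hR).hasDerivAt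
    have hF : HasDerivAt (fun x => x * deriv a x + (c₁ * (a x)^3 + c₂ * (a x)^2 + a x))
        (1 * deriv a R + R * deriv (deriv a) R
          + (c₁ * ((3:ℕ) * (a R)^2 * deriv a R) + c₂ * ((2:ℕ) * (a R)^1 * deriv a R)
            + deriv a R)) R := by
      exact ((hasDerivAt_id R).mul hA').add
        ((((hA.pow 3).const_mul c₁).add ((hA.pow 2).const_mul c₂)).add hA)
    have hzero : (fun x => x * deriv a x + (c₁ * (a x)^3 + c₂ * (a x)^2 + a x))
        =ᶠ[nhds R] fun _ => (0:ℝ) := by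
      filter_upwards [hmem] with x hx
      have h2 := haeq x hx
      rw [hq] at h2
      linear_combination h2
    have hd0 : deriv (fun x => x * deriv a x + (c₁ * (a x)^3 + c₂ * (a x)^2 + a x)) R = 0 := by
      rw [hzero.deriv_eq]; simp
    have := hF.deriv
    rw [hd0] at this
    push_cast at this
    linarith [this]
  constructor
  · -- forward
    intro heq
    rcases Set.eq_empty_or_nonempty J with hJe | ⟨R₀, hR₀⟩
    · exact ⟨0, 1, one_ne_zero, fun R hR => absurd (hJe ▸ hR) (Set.notMem_empty R)⟩
    -- g = b' a² / a' has zero derivative on J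
    have hg0 : ∀ R ∈ J, HasDerivAt (fun x => deriv b x * (a x)^2 / deriv a x) 0 R := by
      intro R hR
      have hA := (hadiff R hR).hasDerivAt
      have hA' := (hadiff2 R hR).hasDerivAt
      have hB' := (hbdiff2 R hR).hasDerivAt
      have hnum : HasDerivAt (fun x => deriv b x * (a x)^2)
          (deriv (deriv b) R * (a R)^2 + deriv b R * ((2:ℕ) * (a R)^1 * deriv a R)) R :=
        hB'.mul (hA.pow 2)
      have hgd := hnum.div hA' (ha' R hR)
      have hN : (deriv (deriv b) R * (a R)^2 + deriv b R * ((2:ℕ) * (a R)^1 * deriv a R))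
            * deriv a R - deriv b R * (a R)^2 * deriv (deriv a) R = 0 := by
        have hR0 := hRne R hR
        have h1 := heq R hR
        have h2 := haeq R hR
        rw [hq] at h2
        have h3 := key_a R hR
        have hmul : ((deriv (deriv b) R * (a R)^2 + deriv b R * ((2:ℕ) * (a R)^1 * deriv a R))
            * deriv a R - deriv b R * (a R)^2 * deriv (deriv a) R) * R = 0 := by
          push_cast
          linear_combination ((a R)^2 * deriv a R) * h1
            + (2 * a R * deriv a R * deriv b R) * h2 - (deriv b R * (a R)^2) * h3
        rcases mul_eq_zero.mp hmul with h | h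
        · exact h
        · exact absurd h hR0
      rw [hN] at hgd
      rw [zero_div] at hgd
      exact hgd
    obtain ⟨K, hKdef⟩ : ∃ K : ℝ, K = deriv b R₀ * (a R₀)^2 / deriv a R₀ := ⟨_, rfl⟩
    have hgconst : ∀ R ∈ J, deriv b R * (a R)^2 / deriv a R = K := by
      intro R hR
      rw [hKdef]
      exact my_const_aux hg0 hR hR₀
    have hKne : K ≠ 0 := by
      rw [hKdef]
      exact div_ne_zero (mul_ne_zero (hb' R₀ hR₀) (pow_ne_zero 2 (hane R₀ hR₀))) (ha' R₀ hR₀)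
    have hb'eq : ∀ R ∈ J, deriv b R = K * deriv a R / (a R)^2 := by
      intro R hR
      have h := hgconst R hR
      rw [div_eq_iff (ha' R hR)] at h
      rw [eq_div_iff (pow_ne_zero 2 (hane R hR))]
      linarith [h]
    -- h = b - (-K)/a has zero derivative
    have hh0 : ∀ R ∈ J, HasDerivAt (fun x => b x - (-K) / a x) 0 R := by
      intro R hR
      have hA := (hadiff R hR).hasDerivAt
      have hB := (hbdiff R hR).hasDerivAt
      have hd := hB.sub ((hasDerivAt_const R (-K)).div hA (hane R hR))
      have hz : deriv b R - (0 * a R - (-K) * deriv a R) / (a R)^2 = 0 := by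
        rw [hb'eq R hR]
        field_simp
        ring
      rw [hz] at hd
      exact hd
    refine ⟨b R₀ - (-K) / a R₀, -K, neg_ne_zero.mpr hKne, fun R hR => ?_⟩
    have := my_const_aux hh0 hR hR₀
    linarith [this]
  · -- backward
    rintro ⟨b₁, b₂, hb₂, hbeq⟩ R hR
    have hbd : ∀ x ∈ J, deriv b x = -b₂ * deriv a x / (a x)^2 := by
      intro x hx
      have hA := (hadiff x hx).hasDerivAt
      have hmem : J ∈ nhds x := hJopen.mem_nhds hx
      have hev : b =ᶠ[nhds x] fun y => b₂ / a y + b₁ := by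
        filter_upwards [hmem] with y hy using hbeq y hy
      have hder : HasDerivAt (fun y => b₂ / a y + b₁)
          (-b₂ * deriv a x / (a x)^2) x := by
        have h := ((hasDerivAt_const x b₂).div hA (hane x hx)).add_const b₁
        convert h using 1
        · rfl
        · rfl
        · rfl
        · ring
      rw [hev.deriv_eq, hder.deriv]
    -- second derivative
    have hmem : J ∈ nhds R := hJopen.mem_nhds hR
    have hev' : deriv b =ᶠ[nhds R] fun x => -b₂ * deriv a x / (a x)^2 := by
      filter_upwards [hmem] with x hx using hbd x hx
    have hA := (hadiff R hR).hasDerivAt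
    have hA' := (hadiff2 R hR).hasDerivAt
    have hφ : HasDerivAt (fun x => -b₂ * deriv a x / (a x)^2)
        ((-b₂ * deriv (deriv a) R * (a R)^2
          - (-b₂ * deriv a R) * ((2:ℕ) * (a R)^1 * deriv a R)) / ((a R)^2)^2) R :=
      (hA'.const_mul (-b₂)).div (hA.pow 2) (pow_ne_zero 2 (hane R hR))
    rw [hev'.deriv_eq, hφ.deriv, hbd R hR]
    have h2 := haeq R hR
    rw [hq] at h2
    have h3 := key_a R hR
    have hRa := hane R hR
    have hrhs : -c₁ * (a R)^2 * (-b₂ * deriv a R / (a R)^2) = c₁ * b₂ * deriv a R := by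
      field_simp
    rw [hrhs, ← mul_div_assoc, div_eq_iff (pow_ne_zero 2 (pow_ne_zero 2 hRa))]
    push_cast
    linear_combination (-b₂ * (a R)^2) * h3 + (2 * b₂ * a R * deriv a R) * h2
end

section
/- Let c₁, c₂ ∈ ℝ, q(x) = c₁x² + c₂x + 1, and let J ⊆ (0,∞) be an open interval on which q(x) > 0. Let Q : J → (0,∞) be a differentiable function satisfying Q′(x)·q(x) = Q(x) for all x ∈ J, and let ρ₀, R₀ > 0. Then: (i) the function ρ(x) = ρ₀·Q(x)³ satisfies ρ′(x)·q(x) = 3·ρ(x) for all x ∈ J; and (ii) the function R(x) = (R₀/x)·√( q(x)·Q(x)^(c₂) ) is differentiable on J and satisfies x·q(x)·R′(x) = −R(x) for all x ∈ J. -/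
/-- Theorem 3 (regular ideal gas Stephani models, in the variable `a`): with
`Q′ q = Q`, the energy density `ρ = ρ₀ Q³` satisfies `ρ′ q = 3ρ` and the metric
function `R(a) = (R₀/a)·√(q(a) Q(a)^{c₂})` satisfies `a q(a) R′(a) = −R(a)`. -/
theorem stmt_12
    (c₁ c₂ : ℝ) (q : ℝ → ℝ) (hq : ∀ x : ℝ, q x = c₁ * x^2 + c₂ * x + 1)
    (J : Set ℝ) (hJint : ∃ u v : ℝ, J = Set.Ioo u v)
    (hJsub : J ⊆ Set.Ioi (0 : ℝ))
    (hqpos : ∀ x ∈ J, 0 < q x)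
    (Q : ℝ → ℝ) (hQpos : ∀ x ∈ J, 0 < Q x)
    (hQdiff : ∀ x ∈ J, DifferentiableAt ℝ Q x)
    (hQode : ∀ x ∈ J, deriv Q x * q x = Q x)
    (ρ₀ R₀ : ℝ) (hρ₀ : 0 < ρ₀) (hR₀ : 0 < R₀)
    (ρ R : ℝ → ℝ)
    (hρdef : ∀ x : ℝ, ρ x = ρ₀ * (Q x)^3)
    (hRdef : ∀ x : ℝ, R x = (R₀ / x) * Real.sqrt (q x * (Q x) ^ c₂)) :
    ∀ x ∈ J,
      deriv ρ x * q x = 3 * ρ x ∧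
      DifferentiableAt ℝ R x ∧
      x * q x * deriv R x = -R x := by
  intro x hx
  have hxpos : (0:ℝ) < x := hJsub hx
  have hxne : x ≠ 0 := hxpos.ne'
  have hqx : 0 < q x := hqpos x hx
  have hQx : 0 < Q x := hQpos x hx
  have hQne : Q x ≠ 0 := hQx.ne'
  have hQ' : HasDerivAt Q (deriv Q x) x := (hQdiff x hx).hasDerivAt
  have hode := hQode x hx
  -- derivative of q
  have hq' : HasDerivAt q (2*c₁*x + c₂) x := by
    have hqfun : q = fun y => c₁ * y^2 + c₂ * y + 1 := funext hq
    rw [hqfun]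
    have h1 : HasDerivAt (fun y : ℝ => c₁ * y^2) (c₁ * (2*x)) x := by
      simpa using (hasDerivAt_pow 2 x).const_mul c₁
    have h2 : HasDerivAt (fun y : ℝ => c₂ * y) c₂ x := by
      simpa using (hasDerivAt_id x).const_mul c₂
    have h3 := (h1.add h2).add_const (1:ℝ)
    exact h3.congr_deriv (by ring)
  -- ρ part
  have hρ' : HasDerivAt ρ (ρ₀ * (3 * Q x ^ 2 * deriv Q x)) x := by
    have hρfun : ρ = fun y => ρ₀ * Q y ^ 3 := funext hρdef
    rw [hρfun]
    have := (hQ'.pow 3).const_mul ρ₀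
    exact this.congr_deriv (by norm_num)
  constructor
  · rw [hρ'.deriv, hρdef]
    linear_combination (3 * ρ₀ * Q x ^ 2) * hode
  -- R part
  have hA : HasDerivAt (fun y => Q y ^ c₂)
      (deriv Q x * c₂ * Q x ^ (c₂ - 1)) x := hQ'.rpow_const (Or.inl hQne)
  have hf : HasDerivAt (fun y => q y * Q y ^ c₂)
      ((2*c₁*x + c₂) * Q x ^ c₂ + q x * (deriv Q x * c₂ * Q x ^ (c₂ - 1))) x :=
    hq'.mul hA
  have hApos : 0 < Q x ^ c₂ := Real.rpow_pos_of_pos hQx c₂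
  have hfx : 0 < q x * Q x ^ c₂ := mul_pos hqx hApos
  have hsd : HasDerivAt (fun y => Real.sqrt (q y * Q y ^ c₂))
      (((2*c₁*x + c₂) * Q x ^ c₂ + q x * (deriv Q x * c₂ * Q x ^ (c₂ - 1))) /
        (2 * Real.sqrt (q x * Q x ^ c₂))) x := hf.sqrt hfx.ne'
  have hinv : HasDerivAt (fun y : ℝ => R₀ / y) (R₀ * (-(x^2)⁻¹)) x := by
    simpa [div_eq_mul_inv] using (hasDerivAt_inv hxne).const_mul R₀
  have hR' : HasDerivAt R
      (R₀ * (-(x^2)⁻¹) * Real.sqrt (q x * Q x ^ c₂) +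
        (R₀ / x) * (((2*c₁*x + c₂) * Q x ^ c₂ + q x * (deriv Q x * c₂ * Q x ^ (c₂ - 1))) /
          (2 * Real.sqrt (q x * Q x ^ c₂)))) x := by
    have hRfun : R = fun y => (R₀ / y) * Real.sqrt (q y * Q y ^ c₂) := funext hRdef
    rw [hRfun]
    exact hinv.mul hsd
  refine ⟨hR'.differentiableAt, ?_⟩
  rw [hR'.deriv, hRdef x]
  set s := Real.sqrt (q x * Q x ^ c₂) with hs
  have hspos : 0 < s := Real.sqrt_pos.mpr hfx
  have hs2 : s^2 = q x * Q x ^ c₂ := Real.sq_sqrt hfx.le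
  have hBQ : Q x ^ (c₂ - 1) * Q x = Q x ^ c₂ := by
    rw [← Real.rpow_add_one hQne]
    ring_nf
  have hqx' : q x = c₁ * x^2 + c₂ * x + 1 := hq x
  have h1 : q x * (deriv Q x * c₂ * Q x ^ (c₂ - 1)) = c₂ * Q x ^ c₂ := by
    rw [← hBQ, ← hode]; ring
  rw [h1]
  field_simp
  linear_combination (2*(q x - 1)*(x^3*R₀ - 1) + 2*R₀*x^3*(1 - q x)) * hs2 + (2*q x*Q x ^ c₂*(x^3*R₀ - 1) - 2*R₀*x^3*q x*Q x ^ c₂) * hqx'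
end

section
/- Let c₁, c₂ ∈ ℝ and define β = c₁/3, γ = 1 + (c₂ + 2c₁)/3, δ = (c₁ + c₂ + 1)/3, and χ(π) = β·π² + γ·π + δ. Let γₐ ∈ (1,2). Then χ(0) = 0 and χ′(0) = γₐ hold if and only if c₁ = 3γₐ − 2 and c₂ = 1 − 3γₐ. Moreover, in that case: χ(π) = (γₐ − 2/3)·π² + γₐ·π, c₁ > 1, c₂ < −2, and Δ ≡ c₂² − 4c₁ = 9(γₐ − 1)² > 0. -/
theorem hasDerivAt_quadratic {𝕜 : Type*} [NontriviallyNormedField 𝕜] (a b c x : 𝕜) :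
    HasDerivAt (fun y => a * y ^ 2 + b * y + c) (2 * a * x + b) x :=
  ((((hasDerivAt_pow 2 x).const_mul a).add ((hasDerivAt_id' x).const_mul b)).add_const c).congr_deriv
    (by norm_num; ring)

theorem deriv_quadratic {𝕜 : Type*} [NontriviallyNormedField 𝕜] (a b c x : 𝕜) :
    deriv (fun y => a * y ^ 2 + b * y + c) x = 2 * a * x + b :=
  (hasDerivAt_quadratic a b c x).deriv

theorem principal_constants_eq_iff {K : Type*} [Field K] [CharZero K] (c₁ c₂ g : K) :
    ((c₁ + c₂ + 1) / 3 = 0 ∧ 1 + (c₂ + 2 * c₁) / 3 = g) ↔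
      (c₁ = 3 * g - 2 ∧ c₂ = 1 - 3 * g) := by
  constructor
  · rintro ⟨hδ, hγ⟩
    exact ⟨by linear_combination 3 * hγ - 3 * hδ, by linear_combination 6 * hδ - 3 * hγ⟩
  · rintro ⟨rfl, rfl⟩
    constructor <;> ring

/-- Propositions 11 and 12: first-order classical ideal gas conditions `χ(0)=0`,
`χ′(0)=γₐ` on the quadratic indicatrix of an ideal gas Stephani universe hold iff
`c₁ = 3γₐ−2` and `c₂ = 1−3γₐ`; in that case `χ(π) = (γₐ−2/3)π² + γₐπ`, `c₁ > 1`,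
`c₂ < −2` and `Δ = 9(γₐ−1)² > 0`. -/
theorem stmt_16
    (c₁ c₂ : ℝ)
    (β γ δ : ℝ)
    (hβ : β = c₁ / 3) (hγ : γ = 1 + (c₂ + 2 * c₁) / 3) (hδ : δ = (c₁ + c₂ + 1) / 3)
    (χ : ℝ → ℝ) (hχdef : ∀ π : ℝ, χ π = β * π^2 + γ * π + δ)
    (γₐ : ℝ) (hγₐ : γₐ ∈ Set.Ioo (1 : ℝ) 2) :
    ((χ 0 = 0 ∧ deriv χ 0 = γₐ) ↔ (c₁ = 3 * γₐ - 2 ∧ c₂ = 1 - 3 * γₐ)) ∧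
    (c₁ = 3 * γₐ - 2 → c₂ = 1 - 3 * γₐ →
      (∀ π : ℝ, χ π = (γₐ - 2/3) * π^2 + γₐ * π) ∧
      1 < c₁ ∧ c₂ < -2 ∧
      c₂^2 - 4 * c₁ = 9 * (γₐ - 1)^2 ∧ 0 < c₂^2 - 4 * c₁) := by
  have hγₐ_gt : 1 < γₐ := hγₐ.1
  have hχ0 : χ 0 = δ := by simp [hχdef]
  have hχ'0 : deriv χ 0 = γ := by
    rw [show χ = fun π => β * π ^ 2 + γ * π + δ from funext hχdef, deriv_quadratic, mul_zero, zero_add]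
  refine ⟨by rw [hχ0, hχ'0, hδ, hγ, principal_constants_eq_iff], fun hc₁ hc₂ => ?_⟩
  subst hc₁ hc₂ hβ hγ hδ
  have hΔ : (1 - 3 * γₐ) ^ 2 - 4 * (3 * γₐ - 2) = 9 * (γₐ - 1) ^ 2 := by ring
  refine ⟨fun π => by rw [hχdef]; ring, by linarith, by linarith, hΔ, ?_⟩
  rw [hΔ]
  have : γₐ - 1 ≠ 0 := by linarith
  positivity
end

section
/- Let γ ∈ (1,2), f₀ > 0, and define the reduced indicatrix χ̄(π) = (γ − 2/3)·π² + (γ − 1)·π. Then the functions f(π) = f₀·( π/((γ − 2/3)π + (γ − 1)) )^(1/(γ−1)) and e(π) = ( 1 + π/(3(γ−1)(π+1)) )³ are differentiable on (0,∞) and satisfy the generating ODEs f′(π)·χ̄(π) = f(π) and e′(π)·χ̄(π)·(π+1) = π·e(π) for all π ∈ (0,∞); moreover e extends continuously to π = 0 with value 1. -/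
private lemma aux_cancel (b d p T : ℝ) (hb : b ≠ 0) (hd : d ≠ 0) (hp : p ≠ 0) :
    b / d ^ 2 * (1 / b) * (T * d / p) * (p * d) = T := by
  field_simp

/-- Proposition 13: the generating functions of the ideal gas thermodynamic schemes in
Stephani universes approximating, at first order in the temperature, a classical ideal
gas of adiabatic index `γ`; they satisfy the generating ODEs for the reduced indicatrix
`χ̄(π) = (γ−2/3)π² + (γ−1)π`, and `e` extends continuously to `0` with value `1`. -/
theorem stmt_17
    (γ : ℝ) (hγ : γ ∈ Set.Ioo (1 : ℝ) 2)
    (f₀ : ℝ) (hf₀ : 0 < f₀)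
    (χbar f e : ℝ → ℝ)
    (hχbar : ∀ π : ℝ, χbar π = (γ - 2/3) * π^2 + (γ - 1) * π)
    (hfdef : ∀ π : ℝ, f π =
      f₀ * (π / ((γ - 2/3) * π + (γ - 1))) ^ (1 / (γ - 1)))
    (hedef : ∀ π : ℝ, e π = (1 + π / (3 * (γ - 1) * (π + 1)))^3) :
    (∀ π ∈ Set.Ioi (0 : ℝ),
      DifferentiableAt ℝ f π ∧ DifferentiableAt ℝ e π ∧
      deriv f π * χbar π = f π ∧
      deriv e π * χbar π * (π + 1) = π * e π) ∧
    Filter.Tendsto e (nhdsWithin 0 (Set.Ioi 0)) (nhds 1) := by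
  obtain ⟨hγ1, hγ2⟩ := hγ
  have hb : (0:ℝ) < γ - 1 := by linarith
  have ha : (0:ℝ) < γ - 2/3 := by linarith
  have hf : f = fun π => f₀ * (π / ((γ - 2/3) * π + (γ - 1))) ^ (1 / (γ - 1)) :=
    funext hfdef
  have he : e = fun π => (1 + π / (3 * (γ - 1) * (π + 1)))^3 := funext hedef
  subst hf he
  constructor
  · intro π hπ
    simp only [Set.mem_Ioi] at hπ
    have hden : (0:ℝ) < (γ - 2/3) * π + (γ - 1) := by nlinarith
    have hg : (0:ℝ) < π / ((γ - 2/3) * π + (γ - 1)) := div_pos hπ hden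
    have hπ1 : (0:ℝ) < π + 1 := by linarith
    -- derivatives
    have hgd : HasDerivAt (fun x : ℝ => x / ((γ - 2/3) * x + (γ - 1)))
        ((1 * ((γ - 2/3) * π + (γ - 1)) - π * (γ - 2/3)) /
          ((γ - 2/3) * π + (γ - 1))^2) π := by
      have h2 : HasDerivAt (fun x:ℝ => (γ-2/3)*x + (γ-1)) (γ-2/3) π := by
        simpa using ((hasDerivAt_id π).const_mul (γ-2/3)).add_const (γ-1)
      exact (hasDerivAt_id π).div h2 hden.ne'
    have hfd : HasDerivAt
        (fun x : ℝ => f₀ * (x / ((γ - 2/3) * x + (γ - 1))) ^ (1 / (γ - 1)))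
        (f₀ * ((1 * ((γ - 2/3) * π + (γ - 1)) - π * (γ - 2/3)) /
            ((γ - 2/3) * π + (γ - 1))^2 * (1 / (γ - 1)) *
          (π / ((γ - 2/3) * π + (γ - 1))) ^ (1 / (γ - 1) - 1))) π :=
      (hgd.rpow_const (Or.inl hg.ne')).const_mul f₀
    have hhd : HasDerivAt (fun x : ℝ => x / (3 * (γ - 1) * (x + 1)))
        ((1 * (3 * (γ - 1) * (π + 1)) - π * (3 * (γ - 1))) /
          (3 * (γ - 1) * (π + 1))^2) π := by
      have h2 : HasDerivAt (fun x:ℝ => 3 * (γ-1) * (x + 1)) (3 * (γ-1)) π := by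
        simpa using (((hasDerivAt_id π).add_const 1).const_mul (3 * (γ-1)))
      exact (hasDerivAt_id π).div h2 (by positivity)
    have hed : HasDerivAt (fun x : ℝ => (1 + x / (3 * (γ - 1) * (x + 1)))^3)
        ((3 : ℕ) * (1 + π / (3 * (γ - 1) * (π + 1)))^(3-1) *
          ((1 * (3 * (γ - 1) * (π + 1)) - π * (3 * (γ - 1))) /
            (3 * (γ - 1) * (π + 1))^2)) π :=
      (hhd.const_add 1).pow 3
    refine ⟨hfd.differentiableAt, hed.differentiableAt, ?_, ?_⟩
    · beta_reduce
      rw [hfd.deriv, hχbar]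
      have key : (π / ((γ - 2/3) * π + (γ - 1))) ^ (1 / (γ - 1) - 1)
          = (π / ((γ - 2/3) * π + (γ - 1))) ^ (1 / (γ - 1))
            / (π / ((γ - 2/3) * π + (γ - 1))) :=
        Real.rpow_sub_one hg.ne' _
      rw [key]
      set T := (π / ((γ - 2/3) * π + (γ - 1))) ^ (1 / (γ - 1)) with hT
      clear_value T
      rw [div_div_eq_mul_div]
      have h1 : 1 * ((γ - 2/3) * π + (γ - 1)) - π * (γ - 2/3) = γ - 1 := by ring
      rw [h1]
      have hχ : (γ - 2/3) * π^2 + (γ - 1) * π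
          = π * ((γ - 2/3) * π + (γ - 1)) := by ring
      rw [hχ]
      rw [mul_assoc, aux_cancel _ _ _ _ hb.ne' hden.ne' hπ.ne']
    · beta_reduce
      rw [hed.deriv, hχbar]
      have h2 : (1 * (3 * (γ - 1) * (π + 1)) - π * (3 * (γ - 1))) = 3 * (γ - 1) := by
        ring
      rw [h2]
      push_cast
      field_simp
      ring
  · have hc : ContinuousAt (fun π : ℝ => (1 + π / (3 * (γ - 1) * (π + 1)))^3) 0 := by
      have : ContinuousAt (fun π : ℝ => 1 + π / (3 * (γ - 1) * (π + 1))) 0 := by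
        apply ContinuousAt.add continuousAt_const
        exact ContinuousAt.div continuousAt_id (by fun_prop) (by norm_num; linarith)
      exact this.pow 3
    have := hc.tendsto.mono_left (nhdsWithin_le_nhds (s := Set.Ioi (0:ℝ)))
    simpa using this
end

section
/- Let γ ∈ (1,2), set c₁ = 3γ − 2 and c₂ = 1 − 3γ, and let q(x) = c₁x² + c₂x + 1. Fix ρ₀ > 0, R₀ > 0, b₁ ∈ ℝ, b₂ ≠ 0. Then: (i) for a₀ = 1 one has q(a₀) = 0, the function ρ(R) = ρ₀·(R₀/R)³ satisfies −R·ρ′(R)/(3ρ(R)) = 1 on (0,∞), and the function b(R) = b₁ + b₂·(R₀/R)^(3(γ−1)) satisfies R·b′′(R) = −c₁·a₀²·b′(R) on (0,∞); and (ii) for a₀ = 1/(3γ−2) one has q(a₀) = 0, the function ρ(R) = ρ₀·(R₀/R)^(1/(γ−2/3)) satisfies −R·ρ′(R)/(3ρ(R)) = a₀ on (0,∞), and the function b(R) = b₁ + b₂·(R/R₀)^((γ−1)/(γ−2/3)) satisfies R·b′′(R) = −c₁·a₀²·b′(R) on (0,∞). -/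
lemma hd1 (b₁ b₂ R₀ p R : ℝ) (hR₀ : 0 < R₀) (hR : 0 < R) :
    HasDerivAt (fun x => b₁ + b₂ * (R₀ / x) ^ p) (-(b₂ * p * R₀ ^ p) * R ^ (-p - 1)) R := by
  have h1 : HasDerivAt (fun x : ℝ => R₀ / x) (R₀ * -((R ^ 2)⁻¹)) R := by
    simpa [div_eq_mul_inv] using (hasDerivAt_inv hR.ne').const_mul R₀
  have h2 := (Real.hasDerivAt_rpow_const (p := p) (Or.inl (div_pos hR₀ hR).ne')).comp R h1
  have h3 := (h2.const_mul b₂).const_add b₁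
  refine h3.congr_deriv (Eq.symm ?_)
  show _ = b₂ * (p * (R₀ / R) ^ (p - 1) * (R₀ * -(R ^ 2)⁻¹))
  rw [Real.div_rpow hR₀.le hR.le]
  rw [show (-p - 1 : ℝ) = -(p-1) + (-2) by ring, Real.rpow_add hR,
    Real.rpow_neg hR.le, Real.rpow_neg hR.le,
    show ((2:ℝ) = ((2:ℕ):ℝ)) by norm_num, Real.rpow_natCast,
    show (p = (p-1) + 1) by ring, Real.rpow_add hR₀, Real.rpow_one]
  ring_nf

lemma hd2 (b₁ b₂ R₀ p R : ℝ) (hR₀ : 0 < R₀) (hR : 0 < R) :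
    HasDerivAt (fun x => b₁ + b₂ * (x / R₀) ^ p) ((b₂ * p / R₀ ^ p) * R ^ (p - 1)) R := by
  have h1 : HasDerivAt (fun x : ℝ => x / R₀) (1 / R₀) R := by
    simpa using (hasDerivAt_id R).div_const R₀
  have h2 := (Real.hasDerivAt_rpow_const (p := p) (Or.inl (div_pos hR hR₀).ne')).comp R h1
  have h3 := (h2.const_mul b₂).const_add b₁
  refine h3.congr_deriv (Eq.symm ?_)
  show _ = b₂ * (p * (R / R₀) ^ (p - 1) * (1 / R₀))
  rw [Real.div_rpow hR.le hR₀.le, Real.rpow_sub hR₀, Real.rpow_one]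
  field_simp

lemma hd3 (C p R : ℝ) (hR : 0 < R) :
    deriv (fun x : ℝ => C * x ^ p) R = C * (p * R ^ (p - 1)) :=
  ((Real.hasDerivAt_rpow_const (p := p) (Or.inl hR.ne')).const_mul C).deriv


/-- Proposition 14: the two families of singular ideal gas Stephani models that
approximate, at first order in the temperature, a classical ideal gas of adiabatic
index `γ` (principal constants `c₁ = 3γ−2`, `c₂ = 1−3γ`). -/
theorem stmt_18
    (γ : ℝ) (hγ : γ ∈ Set.Ioo (1 : ℝ) 2)
    (c₁ c₂ : ℝ) (hc₁ : c₁ = 3 * γ - 2) (hc₂ : c₂ = 1 - 3 * γ)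
    (q : ℝ → ℝ) (hq : ∀ x : ℝ, q x = c₁ * x^2 + c₂ * x + 1)
    (ρ₀ R₀ b₁ b₂ : ℝ) (hρ₀ : 0 < ρ₀) (hR₀ : 0 < R₀) (hb₂ : b₂ ≠ 0) :
    -- (i) models with a₀ = 1
    (q 1 = 0 ∧
      (∀ R : ℝ, 0 < R →
        -R * deriv (fun x => ρ₀ * (R₀ / x)^3) R /
          (3 * (ρ₀ * (R₀ / R)^3)) = 1) ∧
      (∀ R : ℝ, 0 < R →
        R * deriv (deriv (fun x => b₁ + b₂ * (R₀ / x) ^ (3 * (γ - 1)))) R =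
          -c₁ * (1 : ℝ)^2 *
            deriv (fun x => b₁ + b₂ * (R₀ / x) ^ (3 * (γ - 1))) R)) ∧
    -- (ii) models with a₀ = 1/(3γ−2)
    (q (1 / (3 * γ - 2)) = 0 ∧
      (∀ R : ℝ, 0 < R →
        -R * deriv (fun x => ρ₀ * (R₀ / x) ^ (1 / (γ - 2/3))) R /
          (3 * (ρ₀ * (R₀ / R) ^ (1 / (γ - 2/3)))) = 1 / (3 * γ - 2)) ∧
      (∀ R : ℝ, 0 < R →
        R * deriv (deriv (fun x => b₁ + b₂ * (x / R₀) ^ ((γ - 1) / (γ - 2/3)))) R =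
          -c₁ * (1 / (3 * γ - 2))^2 *
            deriv (fun x => b₁ + b₂ * (x / R₀) ^ ((γ - 1) / (γ - 2/3))) R)) := by
  obtain ⟨hγ1, hγ2⟩ := hγ
  have h32 : (0:ℝ) < 3 * γ - 2 := by linarith
  have h23 : (0:ℝ) < γ - 2/3 := by linarith
  refine ⟨⟨?_, ?_, ?_⟩, ?_, ?_, ?_⟩
  · rw [hq]; subst hc₁ hc₂; ring
  · intro R hR
    have h1 : HasDerivAt (fun x : ℝ => R₀ / x) (R₀ * -((R ^ 2)⁻¹)) R := by
      simpa [div_eq_mul_inv] using (hasDerivAt_inv hR.ne').const_mul R₀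
    have h2 : HasDerivAt (fun x => ρ₀ * (R₀ / x)^3) _ R := (h1.pow 3).const_mul ρ₀
    rw [h2.deriv]
    field_simp
    norm_num
    field_simp
  · intro R hR
    set p : ℝ := 3 * (γ - 1) with hp
    set C : ℝ := -(b₂ * p * R₀ ^ p) with hC
    have hev : deriv (fun x => b₁ + b₂ * (R₀ / x) ^ p) =ᶠ[nhds R]
        (fun x => C * x ^ (-p - 1)) := by
      filter_upwards [Ioi_mem_nhds hR] with x hx
      exact (hd1 b₁ b₂ R₀ p x hR₀ hx).deriv
    rw [hev.deriv_eq, hd3 C (-p - 1) R hR, (hd1 b₁ b₂ R₀ p R hR₀ hR).deriv]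
    rw [show (-p - 1 : ℝ) = (-p - 1 - 1) + 1 by ring, Real.rpow_add hR, Real.rpow_one]
    subst hc₁
    rw [hC, hp]
    ring
  · rw [hq]; subst hc₁ hc₂; field_simp; ring
  · intro R hR
    have e1 : (1:ℝ) / (γ - 2/3) = 3 / (3 * γ - 2) := by
      rw [div_eq_div_iff h23.ne' h32.ne']; ring
    rw [e1]
    have h := (hd1 0 ρ₀ R₀ (3 / (3 * γ - 2)) R hR₀ hR)
    simp only [zero_add] at h
    rw [h.deriv]
    rw [Real.div_rpow hR₀.le hR.le, Real.rpow_sub hR, Real.rpow_one,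
      Real.rpow_neg hR.le]
    have hRp : R ^ ((3:ℝ) / (3 * γ - 2)) ≠ 0 := (Real.rpow_pos_of_pos hR _).ne'
    have hR0p : R₀ ^ ((3:ℝ) / (3 * γ - 2)) ≠ 0 := (Real.rpow_pos_of_pos hR₀ _).ne'
    field_simp [hRp, hR0p, hρ₀.ne', hR.ne', h32.ne']
  · intro R hR
    set p : ℝ := (γ - 1) / (γ - 2/3) with hp
    set C : ℝ := b₂ * p / R₀ ^ p with hC
    have hev : deriv (fun x => b₁ + b₂ * (x / R₀) ^ p) =ᶠ[nhds R]
        (fun x => C * x ^ (p - 1)) := by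
      filter_upwards [Ioi_mem_nhds hR] with x hx
      exact (hd2 b₁ b₂ R₀ p x hR₀ hx).deriv
    rw [hev.deriv_eq, hd3 C (p - 1) R hR, (hd2 b₁ b₂ R₀ p R hR₀ hR).deriv]
    rw [Real.rpow_sub hR (p - 1) 1, Real.rpow_one]
    have hkey : p - 1 = -(1 / (3 * γ - 2)) := by
      rw [hp, sub_eq_iff_eq_add, div_eq_iff h23.ne']
      field_simp [h32.ne']
      field_simp [show γ * 3 - 2 ≠ 0 by linarith]
      ring
    rw [hkey]
    subst hc₁
    have hR0p : R₀ ^ p ≠ 0 := (Real.rpow_pos_of_pos hR₀ p).ne'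
    clear_value p C
    rw [hC]
    clear hC hp hev hkey
    field_simp [hR.ne', h32.ne', hR0p]
end
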